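/- Let c belong to the class PS(t0,Λ1,Λ2,S,γ) with γ non-decreasing, and let c∞ ∈ [Λ1,Λ2] be its stabilization constant. Then for every real number λ > 0 and every solution u of u''(t) + λ² c(t) u(t) = 0 on [t0,∞), the Kowaleskian energy E(t) = u'(t)²/√c∞ + λ²√c∞·u(t)² satisfies the estimate from below E(t) ≥ E(t0)·H1^{−1}·exp(−H2·M(t)^{1/2}) for all t ≥ t0, where H1 = 3Λ2/Λ1 and H2 = max{ 2(Λ2−Λ1)^{1/2}/Λ1² , (2Λ1+3)^{1/2}/Λ1^{3/2} }. -/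

import Mathlib

open Real Set Filter MeasureTheory Topology

/-- The Kowaleskian energy `E(t) = u'(t)²/√c∞ + λ²·√c∞·u(t)²`. -/
noncomputable def kowE (cinf lam : ℝ) (u u' : ℝ → ℝ) (t : ℝ) : ℝ :=
  (u' t) ^ 2 / Real.sqrt cinf + lam ^ 2 * Real.sqrt cinf * (u t) ^ 2

/-- `G(t) = ∫_{t0}^t γ(τ)² dτ`. -/
noncomputable def Gfun (t0 : ℝ) (γ : ℝ → ℝ) (t : ℝ) : ℝ :=
  ∫ τ in t0..t, (γ τ) ^ 2

/-- `M(t) = max { G(τ)·S(τ) : τ ∈ [t0,t] }`. -/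
noncomputable def Mfun (t0 : ℝ) (γ S : ℝ → ℝ) (t : ℝ) : ℝ :=
  sSup ((fun τ => Gfun t0 γ τ * S τ) '' Icc t0 t)

/-!
The estimate glues two energy inequalities at a point `s ∈ [t0, t]`.

On `[t0, s]`, where `γ ≤ 2 Λ1^{3/2} λ`, the corrected hyperbolic energy
`u'² + λ² c u² + (c'/2c) u u'` is comparable to `E` and its logarithmic derivative is at least
`c'/(2c) - B γ²/λ` with `B = (2Λ1 + 3)/(4 Λ1^{5/2})`; Grönwall gives
`E(s) ≥ Λ1/(3Λ2) · E(t0) · exp(-(B/λ) G(s))`. On `[s, t]` the energy `E` itself satisfies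
`|E'| ≤ (λ/√Λ1) |c - c∞| E`, which costs `exp(-(λ/√Λ1) ∫_s^t |c - c∞|)`.

The point `s` is found by the intermediate value theorem, where `γ` reaches the threshold or where
`(B/λ) G` meets `(λ/√Λ1) S`. Both exponents are then bounded by a multiple of `√(G S) ≤ √M`: the
integral by `S(s)`, or, beyond the threshold, via `|c - c∞| ≤ Λ2 - Λ1` and `G' = γ² ≥ 4 Λ1³ λ²`.
-/

theorem mul_exp_sub_le_of_hasDerivAt {f f' P p : ℝ → ℝ} {a b : ℝ} (hab : a ≤ b)
    (hf : ContinuousOn f (Icc a b)) (hP : ContinuousOn P (Icc a b))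
    (hf' : ∀ x ∈ Ioo a b, HasDerivAt f (f' x) x) (hP' : ∀ x ∈ Ioo a b, HasDerivAt P (p x) x)
    (h : ∀ x ∈ Ioo a b, p x * f x ≤ f' x) :
    f a * exp (P b - P a) ≤ f b := by
  have hmono : MonotoneOn (fun x => f x * exp (-P x)) (Icc a b) := by
    refine monotoneOn_of_hasDerivWithinAt_nonneg (convex_Icc a b) (hf.mul hP.neg.rexp)
      (f' := fun x => f' x * exp (-P x) + f x * (exp (-P x) * -p x)) ?_ ?_
    · intro x hx
      rw [interior_Icc] at hx ⊢
      exact ((hf' x hx).mul (hP' x hx).neg.exp).hasDerivWithinAt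
    · intro x hx
      rw [interior_Icc] at hx
      nlinarith [h x hx, exp_pos (-P x)]
  calc f a * exp (P b - P a) = f a * exp (-P a) * exp (P b) := by
        rw [mul_assoc, ← exp_add, neg_add_eq_sub]
    _ ≤ f b * exp (-P b) * exp (P b) :=
        mul_le_mul_of_nonneg_right (hmono (left_mem_Icc.2 hab) (right_mem_Icc.2 hab) hab)
          (exp_pos _).le
    _ = f b := by rw [mul_assoc, ← exp_add, neg_add_cancel, exp_zero, mul_one]

theorem exists_le_and_eq_or_eq_right {f g : ℝ → ℝ} {a b : ℝ} (hab : a ≤ b)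
    (hf : ContinuousOn f (Icc a b)) (hg : ContinuousOn g (Icc a b)) (ha : f a ≤ g a) :
    ∃ r ∈ Icc a b, f r ≤ g r ∧ (r = b ∨ f r = g r) := by
  by_cases hb : f b ≤ g b
  · exact ⟨b, right_mem_Icc.2 hab, hb, Or.inl rfl⟩
  · obtain ⟨r, hr, hfgr⟩ := intermediate_value_Icc' hab (hg.sub hf)
      ⟨by simpa using (not_le.1 hb).le, sub_nonneg.2 ha⟩
    have hfgr : f r = g r := (sub_eq_zero.1 hfgr).symm
    exact ⟨r, hr, hfgr.le, Or.inr hfgr⟩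

theorem mul_le_sqrt_mul_mul {a b x y M : ℝ} (hab : 0 ≤ a * b) (hx : 0 ≤ a * x)
    (hxy : a * x ≤ b * y) (hM : x * y ≤ M) : a * x ≤ √(a * b * M) := by
  refine (le_abs_self _).trans (abs_le_sqrt ?_)
  calc (a * x) ^ 2 ≤ a * x * (b * y) := by rw [sq]; gcongr
    _ = a * b * (x * y) := by ring
    _ ≤ a * b * M := by gcongr

theorem two_mul_abs_mul_le_sq_add {k m x y : ℝ} (hkm : k ^ 2 ≤ m) :
    2 * k * |x * y| ≤ y ^ 2 + m * x ^ 2 := by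
  have := two_mul_le_add_sq (k * |x|) |y|
  rw [abs_mul, mul_pow, sq_abs, sq_abs] at *
  nlinarith [mul_le_mul_of_nonneg_right hkm (sq_nonneg x)]

theorem AntitoneOn.le_of_tendsto_Ici {f : ℝ → ℝ} {a l x : ℝ} (hf : AntitoneOn f (Ici a))
    (hlim : Tendsto f atTop (𝓝 l)) (hx : x ∈ Ici a) : l ≤ f x :=
  le_of_tendsto hlim <| by
    filter_upwards [eventually_ge_atTop x] with y hy using hf hx (le_trans hx hy) hy

theorem hasDerivAt_integral_of_continuousOn_Ici {f : ℝ → ℝ} {a x : ℝ}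
    (hf : ContinuousOn f (Ici a)) (hx : a < x) :
    HasDerivAt (fun y => ∫ τ in a..y, f τ) (f x) x :=
  intervalIntegral.integral_hasDerivAt_right
    (hf.mono (uIcc_of_le hx.le ▸ Icc_subset_Ici_self)).intervalIntegrable
    ((hf.mono Ioi_subset_Ici_self).stronglyMeasurableAtFilter isOpen_Ioi x hx)
    (hf.continuousAt (Ici_mem_nhds hx))

theorem continuousOn_integral_Icc {f : ℝ → ℝ} {a b : ℝ} (hab : a ≤ b)
    (hf : ContinuousOn f (Icc a b)) : ContinuousOn (fun y => ∫ τ in a..y, f τ) (Icc a b) := by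
  rw [← uIcc_of_le hab] at hf ⊢
  exact intervalIntegral.continuousOn_primitive_interval (hf.integrableOn_compact isCompact_uIcc)

theorem Gfun_nonneg {γ : ℝ → ℝ} {t0 t : ℝ} (ht : t0 ≤ t) : 0 ≤ Gfun t0 γ t :=
  intervalIntegral.integral_nonneg ht fun _ _ => sq_nonneg _

theorem sq_mul_sub_le_Gfun {γ : ℝ → ℝ} {t0 p r ν : ℝ} (hp : t0 ≤ p) (hpr : p ≤ r)
    (hγ : ContinuousOn γ (Icc t0 r)) (hν : 0 ≤ ν) (hνγ : ∀ σ ∈ Icc p r, ν ≤ γ σ) :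
    ν ^ 2 * (r - p) ≤ Gfun t0 γ r := by
  have hγ2 : ContinuousOn (fun τ => γ τ ^ 2) (Icc t0 r) := hγ.pow 2
  have hint₁ : IntervalIntegrable (fun τ => γ τ ^ 2) volume t0 p :=
    (hγ2.mono (uIcc_of_le hp ▸ Icc_subset_Icc_right hpr)).intervalIntegrable
  have hint₂ : IntervalIntegrable (fun τ => γ τ ^ 2) volume p r :=
    (hγ2.mono (uIcc_of_le hpr ▸ Icc_subset_Icc_left hp)).intervalIntegrable
  rw [Gfun, ← intervalIntegral.integral_add_adjacent_intervals hint₁ hint₂]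
  calc ν ^ 2 * (r - p) = ∫ _ in p..r, ν ^ 2 := by simp [mul_comm]
    _ ≤ ∫ τ in p..r, γ τ ^ 2 :=
        intervalIntegral.integral_mono_on hpr intervalIntegrable_const hint₂
          fun σ hσ => pow_le_pow_left₀ hν (hνγ σ hσ) 2
    _ ≤ _ := le_add_of_nonneg_left (Gfun_nonneg hp)

theorem mul_le_Mfun {γ S : ℝ → ℝ} {t0 t τ : ℝ} (hγ : ContinuousOn γ (Icc t0 t))
    (hS : ContinuousOn S (Icc t0 t)) (hτ : τ ∈ Icc t0 t) :
    Gfun t0 γ τ * S τ ≤ Mfun t0 γ S t :=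
  le_csSup (isCompact_Icc.bddAbove_image
      ((continuousOn_integral_Icc (hτ.1.trans hτ.2) (hγ.pow 2)).mul hS))
    (mem_image_of_mem _ hτ)

theorem mul_integral_le_sqrt_Mfun {γ S q : ℝ → ℝ} {t0 t p α ν δ : ℝ}
    (hγ : ContinuousOn γ (Icc t0 t)) (hS : ContinuousOn S (Icc t0 t))
    (hq : ContinuousOn q (Icc t0 t)) (hqδ : ∀ σ ∈ Icc t0 t, q σ ≤ δ)
    (hqS : ∀ σ ∈ Icc t0 t, ∫ τ in σ..t, q τ ≤ S σ) (hα : 0 ≤ α) (hν : 0 < ν) (hδ : 0 ≤ δ)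
    (hp : p ∈ Icc t0 t) (hSp : 0 ≤ S p) (hνγ : ∀ σ ∈ Icc p t, ν ≤ γ σ) :
    α * ∫ τ in p..t, q τ ≤ 2 * α * √δ / ν * √(Mfun t0 γ S t) := by
  -- `r` is where the trivial bound `δ (r - p)` on `∫_p^r q` meets the tail bound `S r`.
  obtain ⟨r, hr, hDS, hr_eq⟩ := exists_le_and_eq_or_eq_right (f := fun x => δ * (x - p)) hp.2
    (by fun_prop) (hS.mono (Icc_subset_Icc_left hp.1)) (by simpa using hSp)
  have hr0 : r ∈ Icc t0 t := ⟨hp.1.trans hr.1, hr.2⟩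
  have hD : 0 ≤ δ * (r - p) := mul_nonneg hδ (sub_nonneg.2 hr.1)
  have hint : ∫ τ in p..t, q τ ≤ 2 * (δ * (r - p)) := by
    have hqi : ∀ a b, a ∈ Icc t0 t → b ∈ Icc t0 t → IntervalIntegrable q volume a b :=
      fun a b ha hb => (hq.mono (uIcc_subset_Icc ha hb)).intervalIntegrable
    rw [← intervalIntegral.integral_add_adjacent_intervals (hqi p r hp hr0) (hqi r t hr0
      (right_mem_Icc.2 (hp.1.trans hp.2)))]
    have h₁ : ∫ τ in p..r, q τ ≤ δ * (r - p) :=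
      calc ∫ τ in p..r, q τ ≤ ∫ _ in p..r, δ :=
            intervalIntegral.integral_mono_on hr.1 (hqi p r hp hr0) intervalIntegrable_const
              fun σ hσ => hqδ σ ⟨hp.1.trans hσ.1, hσ.2.trans hr.2⟩
        _ = δ * (r - p) := by simp [mul_comm]
    have h₂ : ∫ τ in r..t, q τ ≤ δ * (r - p) := by
      rcases hr_eq with rfl | hDS_eq
      · simpa using hD
      · exact (hqS r hr0).trans hDS_eq.ge
    linarith
  have hM : ν ^ 2 * (r - p) * (δ * (r - p)) ≤ Mfun t0 γ S t :=
    (mul_le_mul (sq_mul_sub_le_Gfun hp.1 hr.1 (hγ.mono (Icc_subset_Icc_right hr.2)) hν.le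
      fun σ hσ => hνγ σ ⟨hσ.1, hσ.2.trans hr.2⟩) hDS hD (Gfun_nonneg hr0.1)).trans
      (mul_le_Mfun hγ hS hr0)
  have hsqrt : ν * (δ * (r - p)) ≤ √(δ * Mfun t0 γ S t) := by
    refine (le_abs_self _).trans (abs_le_sqrt ?_)
    calc (ν * (δ * (r - p))) ^ 2 = δ * (ν ^ 2 * (r - p) * (δ * (r - p))) := by ring
      _ ≤ δ * Mfun t0 γ S t := by gcongr
  calc α * ∫ τ in p..t, q τ ≤ α * (2 * (δ * (r - p))) := by gcongr
    _ = 2 * α / ν * (ν * (δ * (r - p))) := by field_simp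
    _ ≤ 2 * α / ν * √(δ * Mfun t0 γ S t) := by gcongr
    _ = 2 * α * √δ / ν * √(Mfun t0 γ S t) := by rw [sqrt_mul hδ]; ring

theorem exists_split_point {γ S : ℝ → ℝ} {t0 t α β ν : ℝ} (ht : t0 ≤ t)
    (hγ : ContinuousOn γ (Icc t0 t)) (hγ_mono : MonotoneOn γ (Icc t0 t))
    (hS : ContinuousOn S (Icc t0 t)) (hS0 : 0 ≤ S t0) (hα : 0 ≤ α) :
    ∃ s ∈ Icc t0 t, (s = t0 ∨ ∀ σ ∈ Icc t0 s, γ σ ≤ ν) ∧ β * Gfun t0 γ s ≤ α * S s ∧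
      (β * Gfun t0 γ s = α * S s ∨ s = t ∨ ∀ σ ∈ Icc s t, ν ≤ γ σ) := by
  have hG0 : β * Gfun t0 γ t0 ≤ α * S t0 := by
    simpa [Gfun] using mul_nonneg hα hS0
  by_cases hγ0 : γ t0 ≤ ν
  · obtain ⟨s₁, hs₁, hγs₁, hs₁_eq⟩ :=
      exists_le_and_eq_or_eq_right ht hγ continuousOn_const hγ0
    obtain ⟨s, hs, hGS, hs_eq⟩ := exists_le_and_eq_or_eq_right (f := fun x => β * Gfun t0 γ x)
      (g := fun x => α * S x) hs₁.1
      (continuousOn_const.mul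
        (continuousOn_integral_Icc hs₁.1 ((hγ.mono (Icc_subset_Icc_right hs₁.2)).pow 2)))
      (continuousOn_const.mul (hS.mono (Icc_subset_Icc_right hs₁.2))) hG0
    have hst : s ∈ Icc t0 t := ⟨hs.1, hs.2.trans hs₁.2⟩
    refine ⟨s, hst, Or.inr fun σ hσ => (hγ_mono ⟨hσ.1, hσ.2.trans hst.2⟩ hs₁
      (hσ.2.trans hs.2)).trans hγs₁, hGS, ?_⟩
    rcases hs_eq with rfl | h
    · rcases hs₁_eq with rfl | h
      · exact Or.inr (Or.inl rfl)
      · exact Or.inr (Or.inr fun σ hσ => h.ge.trans (hγ_mono hs₁ ⟨hs.1.trans hσ.1, hσ.2⟩ hσ.1))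
    · exact Or.inl h
  · exact ⟨t0, left_mem_Icc.2 ht, Or.inl rfl, hG0, Or.inr (Or.inr fun σ hσ =>
      (not_le.1 hγ0).le.trans (hγ_mono (left_mem_Icc.2 ht) hσ hσ.1))⟩

theorem split_exponent_le_sqrt_Mfun {γ S q : ℝ → ℝ} {t0 t s α β ν δ : ℝ}
    (hγ : ContinuousOn γ (Icc t0 t)) (hS : ContinuousOn S (Icc t0 t))
    (hq : ContinuousOn q (Icc t0 t)) (hqδ : ∀ σ ∈ Icc t0 t, q σ ≤ δ)
    (hqS : ∀ σ ∈ Icc t0 t, ∫ τ in σ..t, q τ ≤ S σ) (hα : 0 ≤ α) (hβ : 0 ≤ β) (hν : 0 < ν)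
    (hδ : 0 ≤ δ) (hs : s ∈ Icc t0 t) (hSs : 0 ≤ S s) (hGS : β * Gfun t0 γ s ≤ α * S s)
    (hcase : β * Gfun t0 γ s = α * S s ∨ s = t ∨ ∀ σ ∈ Icc s t, ν ≤ γ σ) :
    β * Gfun t0 γ s + α * ∫ τ in s..t, q τ ≤
      2 * max (2 * α * √δ / ν) √(α * β) * √(Mfun t0 γ S t) := by
  have hM := mul_le_Mfun hγ hS hs
  have hX : β * Gfun t0 γ s ≤ √(α * β) * √(Mfun t0 γ S t) := by
    rw [← sqrt_mul (mul_nonneg hα hβ), mul_comm α]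
    exact mul_le_sqrt_mul_mul (mul_nonneg hβ hα) (mul_nonneg hβ (Gfun_nonneg hs.1)) hGS hM
  have hY : α * ∫ τ in s..t, q τ ≤ max (2 * α * √δ / ν) √(α * β) * √(Mfun t0 γ S t) := by
    rcases hcase with h | rfl | h
    · calc α * ∫ τ in s..t, q τ ≤ α * S s := by gcongr; exact hqS s hs
        _ ≤ √(α * β) * √(Mfun t0 γ S t) := h ▸ hX
        _ ≤ _ := by gcongr; exact le_max_right _ _
    · simp only [intervalIntegral.integral_same, mul_zero]
      positivity
    · exact (mul_integral_le_sqrt_Mfun hγ hS hq hqδ hqS hα hν hδ hs hSs h).trans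
        (by gcongr; exact le_max_left _ _)
  have hmax : √(α * β) ≤ max (2 * α * √δ / ν) √(α * β) := le_max_right _ _
  nlinarith [sqrt_nonneg (Mfun t0 γ S t)]

theorem two_mul_max_rates_eq {Λ1 Λ2 lam : ℝ} (hΛ1 : 0 < Λ1) (hlam : 0 < lam) :
    2 * max (2 * (lam / √Λ1) * √(Λ2 - Λ1) / (2 * Λ1 * √Λ1 * lam))
        √(lam / √Λ1 * ((2 * Λ1 + 3) / (4 * Λ1 ^ 2 * √Λ1 * lam))) =
      max (2 * √(Λ2 - Λ1) / Λ1 ^ 2) (√(2 * Λ1 + 3) / Λ1 ^ ((3 : ℝ) / 2)) := by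
  have hrpow : Λ1 ^ ((3 : ℝ) / 2) = Λ1 * √Λ1 := by
    rw [show (3 : ℝ) / 2 = 1 + 1 / 2 by norm_num, rpow_add hΛ1, rpow_one, ← sqrt_eq_rpow]
  rw [mul_max_of_nonneg _ _ zero_le_two, hrpow]
  congr 1
  · field_simp
    rw [sq_sqrt hΛ1.le]
  · rw [show lam / √Λ1 * ((2 * Λ1 + 3) / (4 * Λ1 ^ 2 * √Λ1 * lam)) =
        (2 * Λ1 + 3) / (2 * (Λ1 * √Λ1)) ^ 2 by field_simp; norm_num,
      sqrt_div' _ (by positivity), sqrt_sq (by positivity)]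
    field_simp

section Energy

variable {c c' c'' u u' : ℝ → ℝ} {lam : ℝ}

theorem sqrt_mul_kowE {a : ℝ} (t : ℝ) (ha : 0 < a) :
    √a * kowE a lam u u' t = u' t ^ 2 + lam ^ 2 * a * u t ^ 2 := by
  have hsq : √a ^ 2 = a := sq_sqrt ha.le
  have : √a ≠ 0 := (sqrt_pos.2 ha).ne'
  unfold kowE
  field_simp
  linear_combination lam ^ 2 * u t ^ 2 * hsq

theorem kowE_nonneg {a : ℝ} (t : ℝ) : 0 ≤ kowE a lam u u' t := by
  unfold kowE; positivity

theorem two_mul_abs_mul_le_kowE {a : ℝ} (t : ℝ) (ha : 0 < a) :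
    2 * lam * |u t * u' t| ≤ kowE a lam u u' t := by
  have h := two_mul_abs_mul_le_sq_add (k := lam * √a) (m := lam ^ 2 * a) (x := u t) (y := u' t)
    (by rw [mul_pow, sq_sqrt ha.le])
  rw [← sqrt_mul_kowE t ha] at h
  have := sqrt_pos.2 ha
  nlinarith

theorem sqrt_mul_kowE_le_sqrt_mul_kowE {Λ1 Λ2 a b : ℝ} (t : ℝ) (hΛ1 : 0 < Λ1)
    (ha : a ∈ Icc Λ1 Λ2) (hb : b ∈ Icc Λ1 Λ2) :
    √Λ1 * kowE a lam u u' t ≤ √Λ2 * kowE b lam u u' t := by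
  have ha0 : 0 < a := hΛ1.trans_le ha.1
  have hb0 : 0 < b := hΛ1.trans_le hb.1
  have h₁ : √Λ1 / √a ≤ √Λ2 / √b := by
    rw [div_le_div_iff₀ (sqrt_pos.2 ha0) (sqrt_pos.2 hb0), ← sqrt_mul hΛ1.le,
      ← sqrt_mul (hΛ1.le.trans (ha.1.trans ha.2))]
    exact sqrt_le_sqrt (by nlinarith [ha.1, hb.2])
  have h₂ : √Λ1 * √a ≤ √Λ2 * √b := by
    rw [← sqrt_mul hΛ1.le, ← sqrt_mul (hΛ1.le.trans (ha.1.trans ha.2))]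
    exact sqrt_le_sqrt (by nlinarith [ha.2, hb.1])
  unfold kowE
  calc √Λ1 * (u' t ^ 2 / √a + lam ^ 2 * √a * u t ^ 2)
      = √Λ1 / √a * u' t ^ 2 + lam ^ 2 * (√Λ1 * √a) * u t ^ 2 := by ring
    _ ≤ √Λ2 / √b * u' t ^ 2 + lam ^ 2 * (√Λ2 * √b) * u t ^ 2 := by gcongr
    _ = √Λ2 * (u' t ^ 2 / √b + lam ^ 2 * √b * u t ^ 2) := by ring

theorem hasDerivWithinAt_kowE {cinf x : ℝ} {D : Set ℝ} (hcinf : 0 < cinf)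
    (hu : HasDerivWithinAt u (u' x) D x) (hu' : HasDerivWithinAt u' (-(lam ^ 2 * c x * u x)) D x) :
    HasDerivWithinAt (kowE cinf lam u u')
      (2 * lam ^ 2 * (cinf - c x) * (u x * u' x) / √cinf) D x := by
  have h : HasDerivWithinAt (kowE cinf lam u u') (2 * u' x ^ 1 * -(lam ^ 2 * c x * u x) / √cinf
      + lam ^ 2 * √cinf * (2 * u x ^ 1 * u' x)) D x :=
    ((hu'.pow 2).div_const √cinf).add ((hu.pow 2).const_mul (lam ^ 2 * √cinf))
  have hsq : √cinf ^ 2 = cinf := sq_sqrt hcinf.le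
  have : √cinf ≠ 0 := (sqrt_pos.2 hcinf).ne'
  refine h.congr_deriv ?_
  field_simp
  linear_combination lam ^ 2 * u x * u' x * hsq

theorem kowE_rate_le {cinf : ℝ} (x : ℝ) (hcinf : 0 < cinf) (hlam : 0 ≤ lam) :
    -(lam / √cinf * |c x - cinf|) * kowE cinf lam u u' x ≤
      2 * lam ^ 2 * (cinf - c x) * (u x * u' x) / √cinf := by
  have hE := two_mul_abs_mul_le_kowE (lam := lam) (u := u) (u' := u') x hcinf
  have habs : -((cinf - c x) * (u x * u' x)) ≤ |c x - cinf| * |u x * u' x| := by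
    rw [abs_sub_comm, ← abs_mul]; exact neg_le_abs _
  rw [neg_mul, neg_le]
  calc -(2 * lam ^ 2 * (cinf - c x) * (u x * u' x) / √cinf)
      = 2 * lam ^ 2 * -((cinf - c x) * (u x * u' x)) / √cinf := by ring
    _ ≤ 2 * lam ^ 2 * (|c x - cinf| * |u x * u' x|) / √cinf := by gcongr
    _ = lam * |c x - cinf| * (2 * lam * |u x * u' x|) / √cinf := by ring
    _ ≤ lam / √cinf * |c x - cinf| * kowE cinf lam u u' x := by
      rw [div_mul_eq_mul_div, div_mul_eq_mul_div]; gcongr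

theorem kowE_mul_exp_le {t0 cinf p q : ℝ} (hcinf : 0 < cinf) (hlam : 0 ≤ lam)
    (hc : ContinuousOn c (Ici t0))
    (hu : ∀ t ∈ Ici t0, HasDerivWithinAt u (u' t) (Ici t0) t)
    (hu' : ∀ t ∈ Ici t0, HasDerivWithinAt u' (-(lam ^ 2 * c t * u t)) (Ici t0) t)
    (hp : t0 ≤ p) (hpq : p ≤ q) :
    kowE cinf lam u u' p * exp (-(lam / √cinf * ∫ τ in p..q, |c τ - cinf|)) ≤
      kowE cinf lam u u' q := by
  have hsub : Icc p q ⊆ Ici t0 := fun x hx => hp.trans hx.1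
  have hdist : ContinuousOn (fun τ => |c τ - cinf|) (Ici p) :=
    ((hc.mono (Ici_subset_Ici.2 hp)).sub continuousOn_const).abs
  have hE (x : ℝ) (hx : x ∈ Ici t0) := hasDerivWithinAt_kowE hcinf (hu x hx) (hu' x hx)
  have key := mul_exp_sub_le_of_hasDerivAt hpq
    (fun x hx => (hE x (hsub hx)).continuousWithinAt.mono hsub)
    (P := fun x => -(lam / √cinf * ∫ τ in p..x, |c τ - cinf|))
    (p := fun x => -(lam / √cinf * |c x - cinf|))
    (continuousOn_const.mul (continuousOn_integral_Icc hpq (hdist.mono Icc_subset_Ici_self))).neg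
    (fun x hx => (hE x (hsub (Ioo_subset_Icc_self hx))).hasDerivAt
      (Ici_mem_nhds (hp.trans_lt hx.1)))
    (fun x hx => ((hasDerivAt_integral_of_continuousOn_Ici hdist hx.1).const_mul _).neg)
    (fun x _ => kowE_rate_le x hcinf hlam)
  simpa using key

noncomputable def hypEnergy (c : ℝ → ℝ) (lam : ℝ) (u u' : ℝ → ℝ) (t : ℝ) : ℝ :=
  u' t ^ 2 + lam ^ 2 * c t * u t ^ 2

/-- The correction `c'/(2c) · u u'` cancels the term `λ² c' u²` in the derivative of the
hyperbolic energy; what is left is `c'/(2c)` times the energy plus a remainder of size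
`γ² |u u'|`. -/
noncomputable def corrEnergy (c c' : ℝ → ℝ) (lam : ℝ) (u u' : ℝ → ℝ) (t : ℝ) : ℝ :=
  hypEnergy c lam u u' t + c' t / (2 * c t) * (u t * u' t)

theorem hypEnergy_eq_sqrt_mul_kowE (t : ℝ) (hc : 0 < c t) :
    hypEnergy c lam u u' t = √(c t) * kowE (c t) lam u u' t :=
  (sqrt_mul_kowE t hc).symm

theorem two_mul_abs_mul_le_hypEnergy {Λ1 t : ℝ} (hΛ1 : 0 ≤ Λ1) (hc : Λ1 ≤ c t) :
    2 * (lam * √Λ1) * |u t * u' t| ≤ hypEnergy c lam u u' t :=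
  two_mul_abs_mul_le_sq_add (by rw [mul_pow, sq_sqrt hΛ1]; gcongr)

theorem two_mul_abs_corr_le_hypEnergy {Λ1 t : ℝ} (hΛ1 : 0 < Λ1) (hc : Λ1 ≤ c t)
    (hc' : |c' t| ≤ 2 * Λ1 * √Λ1 * lam) :
    2 * |c' t / (2 * c t) * (u t * u' t)| ≤ hypEnergy c lam u u' t := by
  have hc0 : 0 < c t := hΛ1.trans_le hc
  have hb : |c' t / (2 * c t)| ≤ lam * √Λ1 := by
    rw [abs_div, abs_of_pos (by linarith : (0 : ℝ) < 2 * c t), div_le_iff₀ (by linarith)]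
    have : 0 ≤ lam * √Λ1 := by nlinarith [abs_nonneg (c' t), sqrt_nonneg Λ1]
    nlinarith [mul_le_mul_of_nonneg_left hc this]
  calc 2 * |c' t / (2 * c t) * (u t * u' t)|
      = 2 * |c' t / (2 * c t)| * |u t * u' t| := by rw [abs_mul, mul_assoc]
    _ ≤ 2 * (lam * √Λ1) * |u t * u' t| := by gcongr
    _ ≤ hypEnergy c lam u u' t := two_mul_abs_mul_le_hypEnergy hΛ1.le hc

theorem hypEnergy_le_two_mul_corrEnergy {Λ1 t : ℝ} (hΛ1 : 0 < Λ1) (hc : Λ1 ≤ c t)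
    (hc' : |c' t| ≤ 2 * Λ1 * √Λ1 * lam) :
    hypEnergy c lam u u' t ≤ 2 * corrEnergy c c' lam u u' t := by
  have := two_mul_abs_corr_le_hypEnergy (u := u) (u' := u') hΛ1 hc hc'
  have := neg_abs_le (c' t / (2 * c t) * (u t * u' t))
  unfold corrEnergy
  linarith

theorem two_mul_corrEnergy_le_three_mul_hypEnergy {Λ1 t : ℝ} (hΛ1 : 0 < Λ1) (hc : Λ1 ≤ c t)
    (hc' : |c' t| ≤ 2 * Λ1 * √Λ1 * lam) :
    2 * corrEnergy c c' lam u u' t ≤ 3 * hypEnergy c lam u u' t := by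
  have := two_mul_abs_corr_le_hypEnergy (u := u) (u' := u') hΛ1 hc hc'
  have := le_abs_self (c' t / (2 * c t) * (u t * u' t))
  unfold corrEnergy
  linarith

theorem hasDerivWithinAt_corrEnergy {x : ℝ} {D : Set ℝ} (hcx : c x ≠ 0)
    (hc : HasDerivWithinAt c (c' x) D x) (hc' : HasDerivWithinAt c' (c'' x) D x)
    (hu : HasDerivWithinAt u (u' x) D x) (hu' : HasDerivWithinAt u' (-(lam ^ 2 * c x * u x)) D x) :
    HasDerivWithinAt (corrEnergy c c' lam u u')
      (c' x / (2 * c x) * corrEnergy c c' lam u u' x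
        + (c'' x / (2 * c x) - 3 * c' x ^ 2 / (4 * c x ^ 2)) * (u x * u' x)) D x := by
  have h : HasDerivWithinAt (corrEnergy c c' lam u u') _ D x :=
    ((hu'.pow 2).add ((hc.const_mul (lam ^ 2)).mul (hu.pow 2))).add
      ((hc'.div (hc.const_mul 2) (mul_ne_zero two_ne_zero hcx)).mul (hu.mul hu'))
  refine h.congr_deriv ?_
  unfold corrEnergy hypEnergy
  simp only [Pi.pow_apply, Pi.div_apply]
  field_simp
  ring

theorem abs_corrRemainder_le {Λ1 C C1 C2 g : ℝ} (hΛ1 : 0 < Λ1) (hC : Λ1 ≤ C) (hC1 : |C1| ≤ g)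
    (hC2 : |C2| ≤ g ^ 2) :
    |C2 / (2 * C) - 3 * C1 ^ 2 / (4 * C ^ 2)| ≤ (2 * Λ1 + 3) / (4 * Λ1 ^ 2) * g ^ 2 := by
  have hC0 : 0 < C := hΛ1.trans_le hC
  have hC1' : C1 ^ 2 ≤ g ^ 2 := by
    rw [← sq_abs]; exact pow_le_pow_left₀ (abs_nonneg _) hC1 2
  calc |C2 / (2 * C) - 3 * C1 ^ 2 / (4 * C ^ 2)|
      ≤ |C2 / (2 * C)| + |3 * C1 ^ 2 / (4 * C ^ 2)| := abs_sub _ _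
    _ = |C2| / (2 * C) + 3 * C1 ^ 2 / (4 * C ^ 2) := by
        rw [abs_div, abs_of_pos (by linarith : 0 < 2 * C),
          abs_of_nonneg (by positivity : (0 : ℝ) ≤ 3 * C1 ^ 2 / (4 * C ^ 2))]
    _ ≤ g ^ 2 / (2 * Λ1) + 3 * g ^ 2 / (4 * Λ1 ^ 2) := by gcongr
    _ = (2 * Λ1 + 3) / (4 * Λ1 ^ 2) * g ^ 2 := by field_simp; ring

theorem corrEnergy_rate_le {Λ1 x : ℝ} {γ : ℝ → ℝ} (hΛ1 : 0 < Λ1) (hlam : 0 < lam)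
    (hc : Λ1 ≤ c x) (hc' : |c' x| ≤ γ x) (hc'' : |c'' x| ≤ γ x ^ 2)
    (hγ : γ x ≤ 2 * Λ1 * √Λ1 * lam) :
    (c' x / (2 * c x) - (2 * Λ1 + 3) / (4 * Λ1 ^ 2 * √Λ1 * lam) * γ x ^ 2)
        * corrEnergy c c' lam u u' x ≤
      c' x / (2 * c x) * corrEnergy c c' lam u u' x
        + (c'' x / (2 * c x) - 3 * c' x ^ 2 / (4 * c x ^ 2)) * (u x * u' x) := by
  have hF : lam * √Λ1 * |u x * u' x| ≤ corrEnergy c c' lam u u' x := by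
    have := two_mul_abs_mul_le_hypEnergy (lam := lam) (u := u) (u' := u') hΛ1.le hc
    have := hypEnergy_le_two_mul_corrEnergy (u := u) (u' := u') hΛ1 hc (hc'.trans hγ)
    linarith
  have hrem : |(c'' x / (2 * c x) - 3 * c' x ^ 2 / (4 * c x ^ 2)) * (u x * u' x)| ≤
      (2 * Λ1 + 3) / (4 * Λ1 ^ 2 * √Λ1 * lam) * γ x ^ 2 * corrEnergy c c' lam u u' x := by
    rw [abs_mul]
    calc _ ≤ (2 * Λ1 + 3) / (4 * Λ1 ^ 2) * γ x ^ 2 * |u x * u' x| := by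
          gcongr; exact abs_corrRemainder_le hΛ1 hc hc' hc''
      _ = (2 * Λ1 + 3) / (4 * Λ1 ^ 2 * √Λ1 * lam) * γ x ^ 2 * (lam * √Λ1 * |u x * u' x|) := by
          field_simp
      _ ≤ _ := by gcongr
  rw [sub_mul]
  linarith [neg_abs_le ((c'' x / (2 * c x) - 3 * c' x ^ 2 / (4 * c x ^ 2)) * (u x * u' x))]

theorem corrEnergy_mul_exp_le {t0 s Λ1 : ℝ} {γ : ℝ → ℝ} (hΛ1 : 0 < Λ1) (hlam : 0 < lam)
    (hc1 : ∀ t ∈ Ici t0, HasDerivWithinAt c (c' t) (Ici t0) t)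
    (hc2 : ∀ t ∈ Ici t0, HasDerivWithinAt c' (c'' t) (Ici t0) t)
    (hc : ∀ t ∈ Ici t0, Λ1 ≤ c t) (hder : ∀ t ∈ Ici t0, |c' t| ≤ γ t ∧ |c'' t| ≤ γ t ^ 2)
    (hγ : ContinuousOn γ (Ici t0))
    (hu : ∀ t ∈ Ici t0, HasDerivWithinAt u (u' t) (Ici t0) t)
    (hu' : ∀ t ∈ Ici t0, HasDerivWithinAt u' (-(lam ^ 2 * c t * u t)) (Ici t0) t)
    (hs : t0 ≤ s) (hsmall : ∀ σ ∈ Icc t0 s, γ σ ≤ 2 * Λ1 * √Λ1 * lam) :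
    corrEnergy c c' lam u u' t0 *
        (√(c s) / √(c t0) * exp (-((2 * Λ1 + 3) / (4 * Λ1 ^ 2 * √Λ1 * lam) * Gfun t0 γ s))) ≤
      corrEnergy c c' lam u u' s := by
  set β := (2 * Λ1 + 3) / (4 * Λ1 ^ 2 * √Λ1 * lam)
  have hsub : Icc t0 s ⊆ Ici t0 := Icc_subset_Ici_self
  have hc0 (t : ℝ) (ht : t ∈ Ici t0) : 0 < c t := hΛ1.trans_le (hc t ht)
  have hFt (x : ℝ) (hx : x ∈ Ici t0) := hasDerivWithinAt_corrEnergy (hc0 x hx).ne' (hc1 x hx)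
    (hc2 x hx) (hu x hx) (hu' x hx)
  -- Grönwall with the weight `log √c - β G`, whose derivative is the rate `c'/(2c) - β γ²`.
  have hgron := mul_exp_sub_le_of_hasDerivAt hs
    (P := fun x => log (c x) / 2 - β * Gfun t0 γ x)
    (fun x hx => (hFt x (hsub hx)).continuousWithinAt.mono hsub)
    ((((ContinuousOn.log (fun x hx => (hc1 x hx).continuousWithinAt) fun x hx =>
      (hc0 x hx).ne').mono hsub).div_const 2).sub
      (continuousOn_const.mul (continuousOn_integral_Icc hs ((hγ.mono hsub).pow 2))))
    (fun x hx => (hFt x (hsub (Ioo_subset_Icc_self hx))).hasDerivAt (Ici_mem_nhds hx.1))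
    (fun x hx => ((((hc1 x (hsub (Ioo_subset_Icc_self hx))).hasDerivAt
        (Ici_mem_nhds hx.1)).log (hc0 x (hsub (Ioo_subset_Icc_self hx))).ne').div_const 2).sub
      ((hasDerivAt_integral_of_continuousOn_Ici (hγ.pow 2) hx.1).const_mul β))
    (fun x hx => by
      have hx' := hsub (Ioo_subset_Icc_self hx)
      convert corrEnergy_rate_le (u := u) (u' := u') hΛ1 hlam (hc x hx') (hder x hx').1
        (hder x hx').2 (hsmall x (Ioo_subset_Icc_self hx)) using 2
      simp only [Pi.pow_apply]
      ring)
  have hexp_log (a : ℝ) (ha : 0 < a) : exp (log a / 2) = √a := by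
    rw [← log_sqrt ha.le, exp_log (sqrt_pos.2 ha)]
  have hexp : exp (log (c s) / 2 - β * Gfun t0 γ s - (log (c t0) / 2 - β * Gfun t0 γ t0)) =
      √(c s) / √(c t0) * exp (-(β * Gfun t0 γ s)) := by
    rw [show Gfun t0 γ t0 = 0 from intervalIntegral.integral_same, mul_zero, sub_zero,
      show ∀ a b g : ℝ, a - g - b = a - b + -g by intros; ring, exp_add, exp_sub,
      hexp_log _ (hc0 s hs), hexp_log _ (hc0 t0 self_mem_Ici)]
  rwa [hexp] at hgron

theorem kowE_mul_exp_le_three_mul_kowE {t0 s Λ1 : ℝ} {γ : ℝ → ℝ} (hΛ1 : 0 < Λ1) (hlam : 0 < lam)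
    (hc1 : ∀ t ∈ Ici t0, HasDerivWithinAt c (c' t) (Ici t0) t)
    (hc2 : ∀ t ∈ Ici t0, HasDerivWithinAt c' (c'' t) (Ici t0) t)
    (hc : ∀ t ∈ Ici t0, Λ1 ≤ c t) (hder : ∀ t ∈ Ici t0, |c' t| ≤ γ t ∧ |c'' t| ≤ γ t ^ 2)
    (hγ : ContinuousOn γ (Ici t0))
    (hu : ∀ t ∈ Ici t0, HasDerivWithinAt u (u' t) (Ici t0) t)
    (hu' : ∀ t ∈ Ici t0, HasDerivWithinAt u' (-(lam ^ 2 * c t * u t)) (Ici t0) t)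
    (hs : t0 ≤ s) (hsmall : ∀ σ ∈ Icc t0 s, γ σ ≤ 2 * Λ1 * √Λ1 * lam) :
    kowE (c t0) lam u u' t0 * exp (-((2 * Λ1 + 3) / (4 * Λ1 ^ 2 * √Λ1 * lam) * Gfun t0 γ s)) ≤
      3 * kowE (c s) lam u u' s := by
  set β := (2 * Λ1 + 3) / (4 * Λ1 ^ 2 * √Λ1 * lam)
  have hc0 (t : ℝ) (ht : t ∈ Ici t0) : 0 < c t := hΛ1.trans_le (hc t ht)
  have hgron := corrEnergy_mul_exp_le hΛ1 hlam hc1 hc2 hc hder hγ hu hu' hs hsmall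
  have h0 := hypEnergy_le_two_mul_corrEnergy (u := u) (u' := u') hΛ1 (hc t0 self_mem_Ici)
    ((hder t0 self_mem_Ici).1.trans (hsmall t0 (left_mem_Icc.2 hs)))
  have h1 := two_mul_corrEnergy_le_three_mul_hypEnergy (u := u) (u' := u') hΛ1 (hc s hs)
    ((hder s hs).1.trans (hsmall s (right_mem_Icc.2 hs)))
  rw [hypEnergy_eq_sqrt_mul_kowE _ (hc0 t0 self_mem_Ici)] at h0
  rw [hypEnergy_eq_sqrt_mul_kowE _ (hc0 s hs)] at h1
  have hct0 : √(c t0) ≠ 0 := (sqrt_pos.2 (hc0 t0 self_mem_Ici)).ne'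
  refine le_of_mul_le_mul_left ?_ (sqrt_pos.2 (hc0 s hs))
  calc √(c s) * (kowE (c t0) lam u u' t0 * exp (-(β * Gfun t0 γ s)))
      = √(c t0) * kowE (c t0) lam u u' t0 * (√(c s) / √(c t0) * exp (-(β * Gfun t0 γ s))) := by
        field_simp
    _ ≤ 2 * corrEnergy c c' lam u u' t0 * (√(c s) / √(c t0) * exp (-(β * Gfun t0 γ s))) := by
        gcongr
    _ ≤ 2 * corrEnergy c c' lam u u' s := by
        rw [mul_assoc]; gcongr
    _ ≤ √(c s) * (3 * kowE (c s) lam u u' s) := by linarith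

theorem kowE_hyperbolic_estimate {t0 s Λ1 Λ2 cinf : ℝ} {γ : ℝ → ℝ} (hΛ1 : 0 < Λ1) (hlam : 0 < lam)
    (hc1 : ∀ t ∈ Ici t0, HasDerivWithinAt c (c' t) (Ici t0) t)
    (hc2 : ∀ t ∈ Ici t0, HasDerivWithinAt c' (c'' t) (Ici t0) t)
    (hhyp : ∀ t ∈ Ici t0, Λ1 ≤ c t ∧ c t ≤ Λ2) (hcinf : cinf ∈ Icc Λ1 Λ2)
    (hder : ∀ t ∈ Ici t0, |c' t| ≤ γ t ∧ |c'' t| ≤ γ t ^ 2) (hγ : ContinuousOn γ (Ici t0))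
    (hu : ∀ t ∈ Ici t0, HasDerivWithinAt u (u' t) (Ici t0) t)
    (hu' : ∀ t ∈ Ici t0, HasDerivWithinAt u' (-(lam ^ 2 * c t * u t)) (Ici t0) t)
    (hs : t0 ≤ s) (hsmall : ∀ σ ∈ Icc t0 s, γ σ ≤ 2 * Λ1 * √Λ1 * lam) :
    kowE cinf lam u u' t0 * (Λ1 / (3 * Λ2)) *
        exp (-((2 * Λ1 + 3) / (4 * Λ1 ^ 2 * √Λ1 * lam) * Gfun t0 γ s)) ≤
      kowE cinf lam u u' s := by
  set e := exp (-((2 * Λ1 + 3) / (4 * Λ1 ^ 2 * √Λ1 * lam) * Gfun t0 γ s))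
  have hΛ2 : 0 < Λ2 := hΛ1.trans_le (hcinf.1.trans hcinf.2)
  have hgrowth := kowE_mul_exp_le_three_mul_kowE hΛ1 hlam hc1 hc2 (fun t ht => (hhyp t ht).1)
    hder hγ hu hu' hs hsmall
  have h0 := sqrt_mul_kowE_le_sqrt_mul_kowE (lam := lam) (u := u) (u' := u') t0 hΛ1 hcinf
    (hhyp t0 self_mem_Ici)
  have h1 := sqrt_mul_kowE_le_sqrt_mul_kowE (lam := lam) (u := u) (u' := u') s hΛ1 (hhyp s hs)
    hcinf
  refine le_of_mul_le_mul_left ?_ (by positivity : 0 < 3 * Λ2)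
  calc 3 * Λ2 * (kowE cinf lam u u' t0 * (Λ1 / (3 * Λ2)) * e)
      = √Λ1 * (√Λ1 * kowE cinf lam u u' t0) * e := by
        field_simp; rw [sq_sqrt hΛ1.le]; ring
    _ ≤ √Λ1 * (√Λ2 * kowE (c t0) lam u u' t0) * e := by gcongr
    _ = √Λ1 * √Λ2 * (kowE (c t0) lam u u' t0 * e) := by ring
    _ ≤ √Λ1 * √Λ2 * (3 * kowE (c s) lam u u' s) := by gcongr
    _ = 3 * √Λ2 * (√Λ1 * kowE (c s) lam u u' s) := by ring
    _ ≤ 3 * √Λ2 * (√Λ2 * kowE cinf lam u u' s) := by gcongr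
    _ = 3 * Λ2 * kowE cinf lam u u' s := by rw [← mul_assoc, mul_assoc 3, mul_self_sqrt hΛ2.le]

theorem kowE_estimate_of_split {t0 t s Λ1 Λ2 cinf : ℝ} {γ : ℝ → ℝ} (hΛ1 : 0 < Λ1)
    (hlam : 0 < lam)
    (hc1 : ∀ t ∈ Ici t0, HasDerivWithinAt c (c' t) (Ici t0) t)
    (hc2 : ∀ t ∈ Ici t0, HasDerivWithinAt c' (c'' t) (Ici t0) t)
    (hhyp : ∀ t ∈ Ici t0, Λ1 ≤ c t ∧ c t ≤ Λ2) (hcinf : cinf ∈ Icc Λ1 Λ2)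
    (hder : ∀ t ∈ Ici t0, |c' t| ≤ γ t ∧ |c'' t| ≤ γ t ^ 2) (hγ : ContinuousOn γ (Ici t0))
    (hu : ∀ t ∈ Ici t0, HasDerivWithinAt u (u' t) (Ici t0) t)
    (hu' : ∀ t ∈ Ici t0, HasDerivWithinAt u' (-(lam ^ 2 * c t * u t)) (Ici t0) t)
    (hs : s ∈ Icc t0 t) (hsmall : s = t0 ∨ ∀ σ ∈ Icc t0 s, γ σ ≤ 2 * Λ1 * √Λ1 * lam) :
    kowE cinf lam u u' t0 * (Λ1 / (3 * Λ2)) *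
        exp (-((2 * Λ1 + 3) / (4 * Λ1 ^ 2 * √Λ1 * lam) * Gfun t0 γ s
          + lam / √Λ1 * ∫ τ in s..t, |c τ - cinf|)) ≤
      kowE cinf lam u u' t := by
  have hcinf0 : 0 < cinf := hΛ1.trans_le hcinf.1
  have hhyperbolic : kowE cinf lam u u' t0 * (Λ1 / (3 * Λ2)) *
      exp (-((2 * Λ1 + 3) / (4 * Λ1 ^ 2 * √Λ1 * lam) * Gfun t0 γ s)) ≤ kowE cinf lam u u' s := by
    rcases hsmall with rfl | hsmall
    · have : Λ1 / (3 * Λ2) ≤ 1 := by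
        rw [div_le_one (by linarith [hcinf.1, hcinf.2])]; linarith [hcinf.1, hcinf.2]
      simpa [Gfun] using mul_le_of_le_one_right (kowE_nonneg _) this
    · exact kowE_hyperbolic_estimate hΛ1 hlam hc1 hc2 hhyp hcinf hder hγ hu hu' hs.1 hsmall
  have hkov := kowE_mul_exp_le hcinf0 hlam.le (fun x hx => (hc1 x hx).continuousWithinAt) hu hu'
    hs.1 hs.2
  have hI : 0 ≤ ∫ τ in s..t, |c τ - cinf| :=
    intervalIntegral.integral_nonneg hs.2 fun _ _ => abs_nonneg _
  rw [neg_add, exp_add, ← mul_assoc]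
  refine le_trans ?_ hkov
  gcongr
  exacts [kowE_nonneg s, hcinf.1]

end Energy

theorem energy_estimate_below_gamma_nondecreasing_general
    (t0 Λ1 Λ2 : ℝ) (hΛ1 : 0 < Λ1)
    (S γ : ℝ → ℝ)
    (hS_cont : ContinuousOn S (Ici t0)) (hS_anti : AntitoneOn S (Ici t0))
    (hS_lim : Tendsto S atTop (nhds 0))
    (hγ_cont : ContinuousOn γ (Ici t0)) (hγ_mono : MonotoneOn γ (Ici t0))
    (c c' c'' : ℝ → ℝ)
    (hc1 : ∀ t ∈ Ici t0, HasDerivWithinAt c (c' t) (Ici t0) t)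
    (hc2 : ∀ t ∈ Ici t0, HasDerivWithinAt c' (c'' t) (Ici t0) t)
    (hhyp : ∀ t ∈ Ici t0, Λ1 ≤ c t ∧ c t ≤ Λ2)
    (cinf : ℝ) (hcinf : cinf ∈ Icc Λ1 Λ2)
    (hstab : ∀ t ∈ Ici t0, ∀ b ≥ t, (∫ τ in t..b, |c τ - cinf|) ≤ S t)
    (hder : ∀ t ∈ Ici t0, |c' t| ≤ γ t ∧ |c'' t| ≤ (γ t) ^ 2)
    (lam : ℝ) (hlam : 0 < lam)
    (u u' : ℝ → ℝ)
    (hu : ∀ t ∈ Ici t0, HasDerivWithinAt u (u' t) (Ici t0) t)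
    (hu' : ∀ t ∈ Ici t0, HasDerivWithinAt u' (-(lam ^ 2 * c t * u t)) (Ici t0) t) :
    ∀ t ∈ Ici t0,
      kowE cinf lam u u' t ≥
        kowE cinf lam u u' t0 * (3 * Λ2 / Λ1)⁻¹ *
          Real.exp (-(max (2 * Real.sqrt (Λ2 - Λ1) / Λ1 ^ 2)
              (Real.sqrt (2 * Λ1 + 3) / Λ1 ^ ((3 : ℝ) / 2)) *
            Real.sqrt (Mfun t0 γ S t))) := by
  intro t ht
  have hsub : Icc t0 t ⊆ Ici t0 := Icc_subset_Ici_self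
  have hS0 (σ : ℝ) (hσ : σ ∈ Ici t0) : 0 ≤ S σ := hS_anti.le_of_tendsto_Ici hS_lim hσ
  obtain ⟨s, hs, hsmall, hGS, hcase⟩ := exists_split_point (α := lam / √Λ1)
    (β := (2 * Λ1 + 3) / (4 * Λ1 ^ 2 * √Λ1 * lam)) (ν := 2 * Λ1 * √Λ1 * lam) ht
    (hγ_cont.mono hsub) (hγ_mono.mono hsub) (hS_cont.mono hsub) (hS0 t0 self_mem_Ici)
    (by positivity)
  have hdist (σ : ℝ) (hσ : σ ∈ Icc t0 t) : |c σ - cinf| ≤ Λ2 - Λ1 := by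
    have := hhyp σ (hsub hσ)
    exact abs_sub_le_iff.2 ⟨by linarith [hcinf.1], by linarith [hcinf.2]⟩
  have hexponent := split_exponent_le_sqrt_Mfun (hγ_cont.mono hsub) (hS_cont.mono hsub)
    ((ContinuousOn.mono (fun x hx => (hc1 x hx).continuousWithinAt) hsub).sub
      continuousOn_const).abs hdist (fun σ hσ => hstab σ hσ.1 t hσ.2) (by positivity)
    (by positivity) (by positivity) (sub_nonneg.2 (hcinf.1.trans hcinf.2)) hs (hS0 s hs.1)
    hGS hcase
  rw [two_mul_max_rates_eq hΛ1 hlam] at hexponent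
  refine le_trans ?_ (kowE_estimate_of_split hΛ1 hlam hc1 hc2 hhyp hcinf hder hγ_cont hu hu' hs
    hsmall)
  rw [inv_div]
  exact mul_le_mul_of_nonneg_left (exp_le_exp.2 (neg_le_neg hexponent))
    (mul_nonneg (kowE_nonneg t0) (div_nonneg hΛ1.le (by linarith [hcinf.1, hcinf.2])))

theorem energy_estimate_below_gamma_nondecreasing
    (t0 Λ1 Λ2 : ℝ) (hΛ1 : 0 < Λ1) (hΛ12 : Λ1 ≤ Λ2)
    (S γ : ℝ → ℝ)
    (hS_cont : ContinuousOn S (Ici t0)) (hS_anti : AntitoneOn S (Ici t0))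
    (hS_lim : Tendsto S atTop (nhds 0))
    (hγ_cont : ContinuousOn γ (Ici t0)) (hγ_mono : MonotoneOn γ (Ici t0))
    (c c' c'' : ℝ → ℝ)
    (hc1 : ∀ t ∈ Ici t0, HasDerivWithinAt c (c' t) (Ici t0) t)
    (hc2 : ∀ t ∈ Ici t0, HasDerivWithinAt c' (c'' t) (Ici t0) t)
    (hc2cont : ContinuousOn c'' (Ici t0))
    (hhyp : ∀ t ∈ Ici t0, Λ1 ≤ c t ∧ c t ≤ Λ2)
    (cinf : ℝ) (hcinf : cinf ∈ Icc Λ1 Λ2)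
    (hstab : ∀ t ∈ Ici t0, ∀ b ≥ t, (∫ τ in t..b, |c τ - cinf|) ≤ S t)
    (hder : ∀ t ∈ Ici t0, |c' t| ≤ γ t ∧ |c'' t| ≤ (γ t) ^ 2)
    (lam : ℝ) (hlam : 0 < lam)
    (u u' : ℝ → ℝ)
    (hu : ∀ t ∈ Ici t0, HasDerivWithinAt u (u' t) (Ici t0) t)
    (hu' : ∀ t ∈ Ici t0, HasDerivWithinAt u' (-(lam ^ 2 * c t * u t)) (Ici t0) t) :
    ∀ t ∈ Ici t0,
      kowE cinf lam u u' t ≥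
        kowE cinf lam u u' t0 * (3 * Λ2 / Λ1)⁻¹ *
          Real.exp (-(max (2 * Real.sqrt (Λ2 - Λ1) / Λ1 ^ 2)
              (Real.sqrt (2 * Λ1 + 3) / Λ1 ^ ((3 : ℝ) / 2)) *
            Real.sqrt (Mfun t0 γ S t))) :=
  energy_estimate_below_gamma_nondecreasing_general t0 Λ1 Λ2 hΛ1 S γ hS_cont hS_anti hS_lim hγ_cont
    hγ_mono c c' c'' hc1 hc2 hhyp cinf hcinf hstab hder lam hlam u u' hu hu'
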